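/- Let u, v, z be smooth 2π-periodic-in-x solutions of u_t = v - u u_x, v_t = z - u v_x, z_t = - u z_x. Then H^{(5)} := ∫₀^{2π} (z² u_x - 2 z v v_x) dx is conserved in time. -/

import Mathlib

open Real

noncomputable def pdx (f : ℝ → ℝ → ℝ) (x t : ℝ) : ℝ := deriv (fun y => f y t) x

noncomputable def pdt (f : ℝ → ℝ → ℝ) (x t : ℝ) : ℝ := deriv (fun s => f x s) t

/-- The material derivative `D_t = ∂/∂t + u ∂/∂x` associated to the velocity `u`. -/
noncomputable def matDt (u f : ℝ → ℝ → ℝ) : ℝ → ℝ → ℝ :=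
  fun x t => pdt f x t + u x t * pdx f x t

section helpers

lemma hasDerivAt_pdx' (f : ℝ → ℝ → ℝ) (hf : ContDiff ℝ (⊤ : ℕ∞) (Function.uncurry f)) (x t : ℝ) :
    HasDerivAt (fun y => f y t) (fderiv ℝ (Function.uncurry f) (x, t) (1, 0)) x := by
  have h := (hf.differentiable (by simp) (x, t)).hasFDerivAt
  have h2 := h.comp x (hasFDerivAt_prodMk_left (𝕜 := ℝ) x t)
  exact h2.hasDerivAt

lemma hasDerivAt_pdt' (f : ℝ → ℝ → ℝ) (hf : ContDiff ℝ (⊤ : ℕ∞) (Function.uncurry f)) (x t : ℝ) :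
    HasDerivAt (fun s => f x s) (fderiv ℝ (Function.uncurry f) (x, t) (0, 1)) t := by
  have h := (hf.differentiable (by simp) (x, t)).hasFDerivAt
  have h2 := h.comp t (hasFDerivAt_prodMk_right (𝕜 := ℝ) x t)
  exact h2.hasDerivAt

lemma pdx_eq (f : ℝ → ℝ → ℝ) (hf : ContDiff ℝ (⊤ : ℕ∞) (Function.uncurry f)) (x t : ℝ) :
    pdx f x t = fderiv ℝ (Function.uncurry f) (x, t) (1, 0) :=
  (hasDerivAt_pdx' f hf x t).deriv

lemma pdt_eq (f : ℝ → ℝ → ℝ) (hf : ContDiff ℝ (⊤ : ℕ∞) (Function.uncurry f)) (x t : ℝ) :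
    pdt f x t = fderiv ℝ (Function.uncurry f) (x, t) (0, 1) :=
  (hasDerivAt_pdt' f hf x t).deriv

lemma hasDerivAt_pdx (f : ℝ → ℝ → ℝ) (hf : ContDiff ℝ (⊤ : ℕ∞) (Function.uncurry f)) (x t : ℝ) :
    HasDerivAt (fun y => f y t) (pdx f x t) x := by
  rw [pdx_eq f hf]; exact hasDerivAt_pdx' f hf x t

lemma hasDerivAt_pdt (f : ℝ → ℝ → ℝ) (hf : ContDiff ℝ (⊤ : ℕ∞) (Function.uncurry f)) (x t : ℝ) :
    HasDerivAt (fun s => f x s) (pdt f x t) t := by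
  rw [pdt_eq f hf]; exact hasDerivAt_pdt' f hf x t

lemma contDiff_pdx (f : ℝ → ℝ → ℝ) (hf : ContDiff ℝ (⊤ : ℕ∞) (Function.uncurry f)) :
    ContDiff ℝ (⊤ : ℕ∞) (Function.uncurry (pdx f)) := by
  have : Function.uncurry (pdx f) = fun p => fderiv ℝ (Function.uncurry f) p (1, 0) := by
    funext p; exact pdx_eq f hf p.1 p.2
  rw [this]
  exact (hf.fderiv_right (by simp)).clm_apply contDiff_const

lemma contDiff_pdt (f : ℝ → ℝ → ℝ) (hf : ContDiff ℝ (⊤ : ℕ∞) (Function.uncurry f)) :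
    ContDiff ℝ (⊤ : ℕ∞) (Function.uncurry (pdt f)) := by
  have : Function.uncurry (pdt f) = fun p => fderiv ℝ (Function.uncurry f) p (0, 1) := by
    funext p; exact pdt_eq f hf p.1 p.2
  rw [this]
  exact (hf.fderiv_right (by simp)).clm_apply contDiff_const

lemma pdt_pdx_comm (f : ℝ → ℝ → ℝ) (hf : ContDiff ℝ (⊤ : ℕ∞) (Function.uncurry f)) (x t : ℝ) :
    pdt (pdx f) x t = pdx (pdt f) x t := by
  set A := fderiv ℝ (Function.uncurry f) with hA
  have hAd : ContDiff ℝ (⊤ : ℕ∞) A := hf.fderiv_right (by simp)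
  set A' := fderiv ℝ A (x, t) with hA'
  have hA'at : HasFDerivAt A A' (x, t) := (hAd.differentiable (by simp) (x, t)).hasFDerivAt
  have e1 : Function.uncurry (pdx f) = fun p => A p (1, 0) := funext fun p => pdx_eq f hf p.1 p.2
  have e2 : Function.uncurry (pdt f) = fun p => A p (0, 1) := funext fun p => pdt_eq f hf p.1 p.2
  have d1 : HasFDerivAt (fun p => A p ((1 : ℝ), (0 : ℝ)))
      ((A'.flip ((1 : ℝ), (0 : ℝ)))) (x, t) := by
    have := hA'at.clm_apply (hasFDerivAt_const ((1 : ℝ), (0 : ℝ)) ((x, t) : ℝ × ℝ))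
    simpa using this
  have d2 : HasFDerivAt (fun p => A p ((0 : ℝ), (1 : ℝ)))
      ((A'.flip ((0 : ℝ), (1 : ℝ)))) (x, t) := by
    have := hA'at.clm_apply (hasFDerivAt_const ((0 : ℝ), (1 : ℝ)) ((x, t) : ℝ × ℝ))
    simpa using this
  have L : pdt (pdx f) x t = A' (0, 1) (1, 0) := by
    rw [pdt_eq (pdx f) (contDiff_pdx f hf) x t, e1, d1.fderiv]; simp
  have R : pdx (pdt f) x t = A' (1, 0) (0, 1) := by
    rw [pdx_eq (pdt f) (contDiff_pdt f hf) x t, e2, d2.fderiv]; simp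
  rw [L, R]
  exact second_derivative_symmetric (fun y => (hf.differentiable (by simp) y).hasFDerivAt) hA'at _ _

lemma hasDerivAt_intervalIntegral_param
    (F Ft : ℝ → ℝ → ℝ) (hF : Continuous (Function.uncurry F))
    (hFt : Continuous (Function.uncurry Ft))
    (hd : ∀ x s, HasDerivAt (fun s' => F x s') (Ft x s) s) (a b t : ℝ) :
    HasDerivAt (fun s => ∫ x in a..b, F x s) (∫ x in a..b, Ft x t) t := by
  obtain ⟨C, hC⟩ : ∃ C, ∀ p ∈ (Set.uIcc a b ×ˢ Metric.closedBall t 1),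
      ‖Function.uncurry Ft p‖ ≤ C :=
    (isCompact_uIcc.prod (isCompact_closedBall t 1)).exists_bound_of_continuousOn
      hFt.continuousOn
  have meas : ∀ s : ℝ, MeasureTheory.AEStronglyMeasurable (fun x => F x s)
      (MeasureTheory.volume.restrict (Set.uIoc a b)) := fun s =>
    (hF.comp (continuous_id.prodMk continuous_const)).aestronglyMeasurable
  have h := intervalIntegral.hasDerivAt_integral_of_dominated_loc_of_deriv_le
    (F := fun s x => F x s) (F' := fun s x => Ft x s) (x₀ := t) (bound := fun _ => C)
    (a := a) (b := b) (s := Metric.ball t 1) (Metric.ball_mem_nhds t one_pos)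
    (Filter.Eventually.of_forall meas)
    ((hF.comp (continuous_id.prodMk continuous_const)).intervalIntegrable a b)
    (hFt.comp (continuous_id.prodMk continuous_const)).aestronglyMeasurable
    (Filter.Eventually.of_forall fun x hx s hs => hC (x, s)
      ⟨Set.uIoc_subset_uIcc hx, Metric.ball_subset_closedBall hs⟩)
    intervalIntegrable_const
    (Filter.Eventually.of_forall fun x _ s _ => hd x s)
  exact h.2

lemma pdx_periodic (f : ℝ → ℝ → ℝ) (hp : ∀ t, Function.Periodic (fun x => f x t) (2 * Real.pi))
    (y t : ℝ) : pdx f (y + 2 * Real.pi) t = pdx f y t := by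
  unfold pdx
  rw [← deriv_comp_add_const]
  congr 1
  funext w
  exact hp t w

end helpers

theorem statement5
    (u v z : ℝ → ℝ → ℝ)
    (hu : ContDiff ℝ (⊤ : ℕ∞) (Function.uncurry u))
    (hv : ContDiff ℝ (⊤ : ℕ∞) (Function.uncurry v))
    (hz : ContDiff ℝ (⊤ : ℕ∞) (Function.uncurry z))
    (hup : ∀ t, Function.Periodic (fun x => u x t) (2 * Real.pi))
    (hvp : ∀ t, Function.Periodic (fun x => v x t) (2 * Real.pi))
    (hzp : ∀ t, Function.Periodic (fun x => z x t) (2 * Real.pi))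
    (heq1 : ∀ x t, pdt u x t = v x t - u x t * pdx u x t)
    (heq2 : ∀ x t, pdt v x t = z x t - u x t * pdx v x t)
    (heq3 : ∀ x t, pdt z x t = - u x t * pdx z x t) :
    ∀ t, deriv (fun s => ∫ x in (0:ℝ)..(2 * Real.pi),
      ((z x s) ^ 2 * pdx u x s - 2 * z x s * v x s * pdx v x s)) t = 0 := by
  intro t
  have hux := contDiff_pdx u hu
  have hvx := contDiff_pdx v hv
  have hzx := contDiff_pdx z hz
  have huxx := contDiff_pdx _ hux
  have hvxx := contDiff_pdx _ hvx
  -- the time derivative of the integrand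
  set Ft : ℝ → ℝ → ℝ := fun x s =>
    (2 * z x s * pdt z x s) * pdx u x s + (z x s) ^ 2 * pdt (pdx u) x s
    - ((2 * pdt z x s * v x s + 2 * z x s * pdt v x s) * pdx v x s
       + 2 * z x s * v x s * pdt (pdx v) x s) with hFtdef
  have hd : ∀ x s, HasDerivAt
      (fun s' => (z x s') ^ 2 * pdx u x s' - 2 * z x s' * v x s' * pdx v x s') (Ft x s) s := by
    intro x s
    have h1 := ((hasDerivAt_pdt z hz x s).pow 2).mul (hasDerivAt_pdt (pdx u) hux x s)
    have h2 := (((hasDerivAt_pdt z hz x s).const_mul 2).mul (hasDerivAt_pdt v hv x s)).mul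
      (hasDerivAt_pdt (pdx v) hvx x s)
    have h3 := h1.sub h2
    refine h3.congr_deriv ?_
    simp only [hFtdef, Pi.mul_apply, Pi.pow_apply, Pi.sub_apply]
    push_cast
    ring
  -- continuity facts (two-variable)
  have Cu : Continuous fun p : ℝ × ℝ => u p.1 p.2 := hu.continuous
  have Cv : Continuous fun p : ℝ × ℝ => v p.1 p.2 := hv.continuous
  have Cz : Continuous fun p : ℝ × ℝ => z p.1 p.2 := hz.continuous
  have Cux : Continuous fun p : ℝ × ℝ => pdx u p.1 p.2 := hux.continuous
  have Cvx : Continuous fun p : ℝ × ℝ => pdx v p.1 p.2 := hvx.continuous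
  have Czt : Continuous fun p : ℝ × ℝ => pdt z p.1 p.2 := (contDiff_pdt z hz).continuous
  have Cvt : Continuous fun p : ℝ × ℝ => pdt v p.1 p.2 := (contDiff_pdt v hv).continuous
  have Cuxt : Continuous fun p : ℝ × ℝ => pdt (pdx u) p.1 p.2 :=
    (contDiff_pdt _ hux).continuous
  have Cvxt : Continuous fun p : ℝ × ℝ => pdt (pdx v) p.1 p.2 :=
    (contDiff_pdt _ hvx).continuous
  have hcF : Continuous (Function.uncurry fun x s =>
      (z x s) ^ 2 * pdx u x s - 2 * z x s * v x s * pdx v x s) := by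
    show Continuous fun p : ℝ × ℝ =>
      (z p.1 p.2) ^ 2 * pdx u p.1 p.2 - 2 * z p.1 p.2 * v p.1 p.2 * pdx v p.1 p.2
    fun_prop
  have hcFt : Continuous (Function.uncurry Ft) := by
    show Continuous fun p : ℝ × ℝ =>
      (2 * z p.1 p.2 * pdt z p.1 p.2) * pdx u p.1 p.2
      + (z p.1 p.2) ^ 2 * pdt (pdx u) p.1 p.2
      - ((2 * pdt z p.1 p.2 * v p.1 p.2 + 2 * z p.1 p.2 * pdt v p.1 p.2) * pdx v p.1 p.2
         + 2 * z p.1 p.2 * v p.1 p.2 * pdt (pdx v) p.1 p.2)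
    fun_prop
  have hder := hasDerivAt_intervalIntegral_param
    (fun x s => (z x s) ^ 2 * pdx u x s - 2 * z x s * v x s * pdx v x s) Ft hcF hcFt hd
    0 (2 * Real.pi) t
  refine hder.deriv.trans ?_
  -- Now show the integral of Ft vanishes.
  -- G(y) = u*F + z^2*v at time t; E = ∂ₓ G
  set g : ℝ → ℝ := fun y =>
    u y t * ((z y t) ^ 2 * pdx u y t - 2 * z y t * v y t * pdx v y t)
    + (z y t) ^ 2 * v y t with hgdef
  set E : ℝ → ℝ := fun y =>
    pdx u y t * ((z y t) ^ 2 * pdx u y t - 2 * z y t * v y t * pdx v y t)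
    + u y t * ((2 * z y t * pdx z y t) * pdx u y t + (z y t) ^ 2 * pdx (pdx u) y t
        - ((2 * pdx z y t * v y t + 2 * z y t * pdx v y t) * pdx v y t
           + 2 * z y t * v y t * pdx (pdx v) y t))
    + ((2 * z y t * pdx z y t) * v y t + (z y t) ^ 2 * pdx v y t) with hEdef
  have hgd : ∀ y, HasDerivAt g (E y) y := by
    intro y
    have h1 := ((hasDerivAt_pdx z hz y t).pow 2).mul (hasDerivAt_pdx (pdx u) hux y t)
    have h2 := (((hasDerivAt_pdx z hz y t).const_mul 2).mul (hasDerivAt_pdx v hv y t)).mul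
      (hasDerivAt_pdx (pdx v) hvx y t)
    have h3 := ((hasDerivAt_pdx u hu y t).mul (h1.sub h2)).add
      (((hasDerivAt_pdx z hz y t).pow 2).mul (hasDerivAt_pdx v hv y t))
    refine h3.congr_deriv ?_
    simp only [hEdef, Pi.mul_apply, Pi.pow_apply, Pi.sub_apply]
    push_cast
    ring
  -- one-variable continuity at time t
  have cE : Continuous E := by
    have c1 : Continuous fun y => u y t := Cu.comp (continuous_id.prodMk continuous_const)
    have c2 : Continuous fun y => v y t := Cv.comp (continuous_id.prodMk continuous_const)
    have c3 : Continuous fun y => z y t := Cz.comp (continuous_id.prodMk continuous_const)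
    have c4 : Continuous fun y => pdx u y t := Cux.comp (continuous_id.prodMk continuous_const)
    have c5 : Continuous fun y => pdx v y t := Cvx.comp (continuous_id.prodMk continuous_const)
    have c6 : Continuous fun y => pdx z y t :=
      hzx.continuous.comp (continuous_id.prodMk continuous_const)
    have c7 : Continuous fun y => pdx (pdx u) y t :=
      huxx.continuous.comp (continuous_id.prodMk continuous_const)
    have c8 : Continuous fun y => pdx (pdx v) y t :=
      hvxx.continuous.comp (continuous_id.prodMk continuous_const)
    rw [hEdef]
    fun_prop
  -- FTC
  have hftc : (∫ y in (0:ℝ)..(2 * Real.pi), E y) = g (2 * Real.pi) - g 0 :=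
    intervalIntegral.integral_eq_sub_of_hasDerivAt (fun y _ => hgd y)
      (cE.intervalIntegrable 0 (2 * Real.pi))
  -- periodicity of g
  have hgper : g (2 * Real.pi) = g 0 := by
    have au : u (2 * Real.pi) t = u 0 t := by simpa using hup t 0
    have av : v (2 * Real.pi) t = v 0 t := by simpa using hvp t 0
    have az : z (2 * Real.pi) t = z 0 t := by simpa using hzp t 0
    have aux : pdx u (2 * Real.pi) t = pdx u 0 t := by simpa using pdx_periodic u hup 0 t
    have avx : pdx v (2 * Real.pi) t = pdx v 0 t := by simpa using pdx_periodic v hvp 0 t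
    simp only [hgdef]
    rw [au, av, az, aux, avx]
  -- pointwise identity Ft x t = -(E x)
  have hkey : ∀ x, Ft x t = -(E x) := by
    intro x
    have hmixu : pdt (pdx u) x t
        = pdx v x t - (pdx u x t * pdx u x t + u x t * pdx (pdx u) x t) := by
      rw [pdt_pdx_comm u hu]
      have : (fun y => pdt u y t) = fun y => v y t - u y t * pdx u y t := by
        funext y; exact heq1 y t
      unfold pdx
      rw [this]
      exact ((hasDerivAt_pdx v hv x t).sub
        ((hasDerivAt_pdx u hu x t).mul (hasDerivAt_pdx (pdx u) hux x t))).deriv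
    have hmixv : pdt (pdx v) x t
        = pdx z x t - (pdx u x t * pdx v x t + u x t * pdx (pdx v) x t) := by
      rw [pdt_pdx_comm v hv]
      have : (fun y => pdt v y t) = fun y => z y t - u y t * pdx v y t := by
        funext y; exact heq2 y t
      unfold pdx
      rw [this]
      exact ((hasDerivAt_pdx z hz x t).sub
        ((hasDerivAt_pdx u hu x t).mul (hasDerivAt_pdx (pdx v) hvx x t))).deriv
    simp only [hFtdef, hEdef, heq2 x t, heq3 x t, hmixu, hmixv]
    ring
  calc (∫ x in (0:ℝ)..(2 * Real.pi), Ft x t)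
      = ∫ x in (0:ℝ)..(2 * Real.pi), -(E x) := by
        apply intervalIntegral.integral_congr
        intro x _
        exact hkey x
    _ = -(∫ x in (0:ℝ)..(2 * Real.pi), E x) := intervalIntegral.integral_neg
    _ = 0 := by rw [hftc, hgper, sub_self, neg_zero]
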